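/- Let n ≥ 2 and 1 ≤ k ≤ n, and let S_{n,k} be the star graph on n vertices with center vertex k (edges {k, j} for all j ≠ k). Then the graph state |S_{n,k}⟩ satisfies |S_{n,k}⟩ = (H^{⊗(k−1)} ⊗ I ⊗ H^{⊗(n−k)}) |GHZ_n⟩, i.e., it equals the n-qubit GHZ state with a Hadamard gate applied to every qubit except qubit k. -/
import Mathlib


open Matrix

/-- `n`-qubit state vectors: functions from bitstrings to `ℂ`. -/
abbrev QVec (n : ℕ) : Type := (Fin n → Fin 2) → ℂ

/-- `n`-qubit operators. -/
abbrev QOp (n : ℕ) : Type := Matrix (Fin n → Fin 2) (Fin n → Fin 2) ℂ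

/-- The state `|+⟩^{⊗ n}`, with amplitude `(1/√2)^n` on every basis state. -/
noncomputable def plusN (n : ℕ) : QVec n := fun _ => (1 / (Real.sqrt 2 : ℂ)) ^ n

/-- The diagonal phase of the controlled-Z gate `CZ_{i j}` on basis state `|t⟩`:
`(-1)^{t i · t j}`. -/
noncomputable def czPhase {n : ℕ} (t : Fin n → Fin 2) (i j : Fin n) : ℂ :=
  (-1) ^ ((t i).val * (t j).val)

/-- The product `∏_{j ≠ k} CZ_{k j}` of the (pairwise commuting, diagonal)
controlled-Z gates along the edges of the star graph `S_{n,k}` with center `k`. -/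
noncomputable def czStar (n : ℕ) (k : Fin n) : QOp n :=
  Matrix.diagonal fun t => ∏ j ∈ Finset.univ.erase k, czPhase t k j

/-- The graph state `|S_{n,k}⟩` of the star graph on `n` vertices with center `k`:
`(∏_{j ≠ k} CZ_{k j}) |+⟩^{⊗ n}`. -/
noncomputable def starGraphState (n : ℕ) (k : Fin n) : QVec n :=
  (czStar n k).mulVec (plusN n)

/-- The `n`-qubit GHZ state `(|0⟩^{⊗n} + |1⟩^{⊗n})/√2`. -/
noncomputable def ghz (n : ℕ) : QVec n := fun s =>
  ((if s = fun _ => 0 then 1 else 0) + (if s = fun _ => 1 then 1 else 0)) /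
    (Real.sqrt 2 : ℂ)

/-- The Hadamard gate `H = (1/√2) [[1,1],[1,-1]]`. -/
noncomputable def hadamard : Matrix (Fin 2) (Fin 2) ℂ :=
  ((Real.sqrt 2 : ℂ))⁻¹ • !![1, 1; 1, -1]

/-- The operator `H^{⊗(k-1)} ⊗ I ⊗ H^{⊗(n-k)}`: a Hadamard on every qubit except
qubit `k`, and the identity on qubit `k`. -/
noncomputable def hadamardExcept (n : ℕ) (k : Fin n) : QOp n :=
  Matrix.of fun s t =>
    (if s k = t k then (1 : ℂ) else 0) *
      ∏ i ∈ Finset.univ.erase k, hadamard (s i) (t i)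

lemma had0 (x : Fin 2) : hadamard x 0 = (Real.sqrt 2 : ℂ)⁻¹ := by
  fin_cases x <;> simp [_root_.hadamard]

lemma had1 (x : Fin 2) : hadamard x 1 = (Real.sqrt 2 : ℂ)⁻¹ * (-1) ^ (x.val) := by
  fin_cases x <;> simp [_root_.hadamard]

/-- **Star graph states are GHZ states up to local Hadamards.**
For `n ≥ 2` and any center `k`, the graph state of the star graph `S_{n,k}`
equals the `n`-qubit GHZ state with a Hadamard applied to every qubit except `k`. -/
theorem star_graph_state_eq_hadamard_ghz (n : ℕ) (hn : 2 ≤ n) (k : Fin n) :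
    starGraphState n k = (hadamardExcept n k).mulVec (ghz n) := by
  funext s
  have hcard : (Finset.univ.erase k).card = n - 1 := by
    rw [Finset.card_erase_of_mem (Finset.mem_univ k), Finset.card_univ, Fintype.card_fin]
  have hrhs : (hadamardExcept n k).mulVec (ghz n) s =
      ((if s k = 0 then (1:ℂ) else 0) * (Real.sqrt 2 : ℂ)⁻¹ ^ (n-1)
       + (if s k = 1 then (1:ℂ) else 0) * ((Real.sqrt 2 : ℂ)⁻¹ ^ (n-1) *
          ∏ i ∈ Finset.univ.erase k, (-1:ℂ) ^ (s i).val)) * (Real.sqrt 2 : ℂ)⁻¹ := by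
    simp only [Matrix.mulVec, dotProduct, hadamardExcept, Matrix.of_apply, ghz,
      div_eq_mul_inv, add_mul, mul_add, Finset.sum_add_distrib]
    congr 1
    · rw [Finset.sum_eq_single (fun _ => (0:Fin 2))]
      · simp [had0, Finset.prod_const, hcard, mul_assoc]
      · intro b _ hb; simp [hb]
      · simp
    · rw [Finset.sum_eq_single (fun _ => (1:Fin 2))]
      · simp only [if_pos rfl, had1, Finset.prod_mul_distrib, Finset.prod_const, hcard,
          mul_one, one_mul, eq_self_iff_true, if_true]
      · intro b _ hb; simp [hb]
      · simp
  rw [hrhs, starGraphState, czStar, Matrix.mulVec_diagonal, plusN, one_div]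
  have h2 : (Real.sqrt 2 : ℂ)⁻¹ ^ (n-1) * (Real.sqrt 2 : ℂ)⁻¹ = (Real.sqrt 2 : ℂ)⁻¹ ^ n := by
    rw [← pow_succ]
    congr 1; omega
  have : s k = 0 ∨ s k = 1 := by omega
  rcases this with hsk | hsk
  · simp only [czPhase, hsk, Fin.val_zero, zero_mul, pow_zero, Finset.prod_const_one,
      Fin.val_one, one_ne_zero, if_true, if_false, ite_true, ite_false, one_mul, mul_zero,
      zero_ne_one, add_zero, h2]
  · simp only [czPhase, hsk, Fin.val_one, one_mul, zero_mul, Fin.val_zero, one_ne_zero,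
      zero_ne_one, if_true, if_false, ite_true, ite_false, mul_zero, zero_add]
    rw [← h2]; ring
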